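/- Let q be a prime power and k, m positive integers. If C ⊆ Mat(k×m, F_q) is an MRD code, then its dual C^⊥ (with respect to the trace product) is also an MRD code. -/

import Mathlib

/-! For `k ≤ m` (the case `m ≤ k` follows by transposing), a code of minimum rank `d` meets the
space of matrices whose columns lie in a fixed `(d-1)`-dimensional subspace `V` trivially. Counting
dimensions gives the Singleton bound `dim C ≤ m (k - d + 1)`, and if `C` attains it then `C` and
that space span everything. A nonzero `N ∈ C^⊥` of rank at most `k - d + 1` has a column space
whose orthogonal contains such a `V`, so `N` would be orthogonal to everything; hence the minimum
rank of `C^⊥` is at least `k - d + 2`. As `dim C^⊥ ≥ km - dim C = m (d - 1)`, the Singleton bound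
for `C^⊥` is attained. -/

open Matrix BigOperators

/-- The Gaussian (q-)binomial coefficient, defined via the q-Pascal recursion. -/
def qBinom (q : ℕ) : ℕ → ℕ → ℕ
  | _, 0 => 1
  | 0, _ + 1 => 0
  | s + 1, t + 1 => qBinom q s t + q ^ (t + 1) * qBinom q s (t + 1)

variable {F : Type} [Field F]

/-- The dual of a rank-metric code with respect to the trace product. -/
def dualCode {k m : ℕ} (C : Submodule F (Matrix (Fin k) (Fin m) F)) :
    Submodule F (Matrix (Fin k) (Fin m) F) where
  carrier := {N | ∀ M ∈ C, Matrix.trace (M * Nᵀ) = 0}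
  add_mem' := by
    intro a b ha hb M hM
    rw [Set.mem_setOf_eq] at *
    rw [Matrix.transpose_add, Matrix.mul_add, Matrix.trace_add, ha M hM, hb M hM, add_zero]
  zero_mem' := by
    intro M hM
    simp
  smul_mem' := by
    intro c N hN M hM
    rw [Set.mem_setOf_eq] at *
    rw [Matrix.transpose_smul, Matrix.mul_smul, Matrix.trace_smul, hN M hM, smul_zero]

/-- Minimum rank of a code. -/
noncomputable def minrk {k m : ℕ} (C : Submodule F (Matrix (Fin k) (Fin m) F)) : ℕ :=
  sInf {r | ∃ M ∈ C, M ≠ 0 ∧ M.rank = r}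

/-- Maximum rank of a code. -/
noncomputable def maxrk {k m : ℕ} (C : Submodule F (Matrix (Fin k) (Fin m) F)) : ℕ :=
  sSup {r | ∃ M ∈ C, M.rank = r}

/-- Rank distribution of a code. -/
noncomputable def rankDist {k m : ℕ} (C : Submodule F (Matrix (Fin k) (Fin m) F)) (i : ℕ) : ℕ :=
  Nat.card {M : Matrix (Fin k) (Fin m) F // M ∈ C ∧ M.rank = i}

/-- MRD codes. -/
def IsMRD {k m : ℕ} (C : Submodule F (Matrix (Fin k) (Fin m) F)) : Prop :=
  C = ⊥ ∨ Module.finrank F ↥C = max k m * (min k m - minrk C + 1)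

/-- Optimal anticodes. -/
def IsOptimalAnticode {k m : ℕ} (C : Submodule F (Matrix (Fin k) (Fin m) F)) : Prop :=
  Module.finrank F ↥C = max k m * maxrk C

/-- The subspace of matrices whose column space is contained in `U`. -/
def matIn {k : ℕ} (m : ℕ) (U : Submodule F (Fin k → F)) :
    Submodule F (Matrix (Fin k) (Fin m) F) where
  carrier := {M | ∀ j, Mᵀ j ∈ U}
  add_mem' := by
    intro a b ha hb j
    rw [Matrix.transpose_add]
    exact U.add_mem (ha j) (hb j)
  zero_mem' := by
    intro j
    rw [Matrix.transpose_zero]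
    exact U.zero_mem
  smul_mem' := by
    intro c M hM j
    rw [Matrix.transpose_smul]
    exact U.smul_mem c (hM j)

/-- The dual of a subspace of `Fin k → K` with respect to the standard inner product. -/
def dualPi {K : Type} [Field K] {k : ℕ} (C : Submodule K (Fin k → K)) :
    Submodule K (Fin k → K) where
  carrier := {β | ∀ α ∈ C, ∑ i, α i * β i = 0}
  add_mem' := by
    intro a b ha hb α hα
    rw [Set.mem_setOf_eq] at *
    have : ∑ i, α i * (a + b) i = (∑ i, α i * a i) + ∑ i, α i * b i := by
      rw [← Finset.sum_add_distrib]
      exact Finset.sum_congr rfl fun i _ => by simp [mul_add]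
    rw [this, ha α hα, hb α hα, add_zero]
  zero_mem' := by
    intro α hα
    simp
  smul_mem' := by
    intro c β hβ α hα
    rw [Set.mem_setOf_eq] at *
    have : ∑ i, α i * (c • β) i = c * ∑ i, α i * β i := by
      rw [Finset.mul_sum]
      exact Finset.sum_congr rfl fun i _ => by simp [smul_eq_mul]; ring
    rw [this, hβ α hα, mul_zero]

/-- The matrix associated to a vector `α ∈ K^k` with respect to a basis `G` of `K` over `F`. -/
noncomputable def matOfBasis (F K : Type) [Field F] [Field K] [Algebra F K]
    (k m : ℕ) (G : Module.Basis (Fin m) F K) :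
    (Fin k → K) →ₗ[F] Matrix (Fin k) (Fin m) F where
  toFun α := Matrix.of fun i j => G.repr (α i) j
  map_add' α β := by
    ext i j
    simp
  map_smul' c α := by
    ext i j
    simp

/-- The `h`-trace of a `k × m` matrix (`k ≤ m`). -/
def hTrace {k m : ℕ} (hkm : k ≤ m) (h : ℕ) (M : Matrix (Fin k) (Fin m) F) : F :=
  ∑ i : Fin k, if (i : ℕ) < h then M i (Fin.castLE hkm i) else 0

open Module

lemma Matrix.rank_eq_zero_iff {ι κ : Type*} [Fintype κ] {M : Matrix ι κ F} :
    M.rank = 0 ↔ M = 0 := by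
  classical
  rw [Matrix.rank, ← Matrix.toLin'_apply', Submodule.finrank_eq_zero, LinearMap.range_eq_bot,
    LinearEquiv.map_eq_zero_iff]

lemma Submodule.exists_le_finrank_eq {V : Type*} [AddCommGroup V] [Module F V]
    [FiniteDimensional F V] (W : Submodule F V) {n : ℕ} (hn : n ≤ finrank F W) :
    ∃ U ≤ W, finrank F U = n := by
  obtain ⟨f, hf⟩ := exists_linearIndependent_of_le_finrank hn
  refine ⟨(Submodule.span F (Set.range f)).map W.subtype, Submodule.map_subtype_le _ _, ?_⟩
  rw [Submodule.finrank_map_subtype_eq, finrank_span_eq_card hf, Fintype.card_fin]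

lemma finrank_matrix_fin (k m : ℕ) : finrank F (Matrix (Fin k) (Fin m) F) = k * m := by
  simp [finrank_matrix]

section Duality

def traceForm (ι κ : Type*) [Fintype ι] [Fintype κ] : LinearMap.BilinForm F (Matrix ι κ F) :=
  LinearMap.mk₂ F (fun M N => trace (M * Nᵀ))
    (fun _ _ _ => by rw [Matrix.add_mul, trace_add])
    (fun _ _ _ => by rw [Matrix.smul_mul, trace_smul])
    (fun _ _ _ => by rw [transpose_add, Matrix.mul_add, trace_add])
    (fun _ _ _ => by rw [transpose_smul, Matrix.mul_smul, trace_smul])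

variable {k m : ℕ}

lemma dualCode_eq_orthogonal (C : Submodule F (Matrix (Fin k) (Fin m) F)) :
    dualCode C = (traceForm (Fin k) (Fin m)).orthogonal C := rfl

lemma dualPi_eq_orthogonal (W : Submodule F (Fin k → F)) :
    dualPi W = LinearMap.BilinForm.orthogonal (dotProductBilin F F) W := rfl

lemma le_finrank_add_finrank_dualCode (C : Submodule F (Matrix (Fin k) (Fin m) F)) :
    k * m ≤ finrank F C + finrank F (dualCode C) := by
  have := LinearMap.BilinForm.finrank_add_finrank_orthogonal' (B := traceForm (Fin k) (Fin m)) C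
  rw [← dualCode_eq_orthogonal, finrank_matrix_fin] at this
  omega

lemma le_finrank_add_finrank_dualPi (W : Submodule F (Fin k → F)) :
    k ≤ finrank F W + finrank F (dualPi W) := by
  have := LinearMap.BilinForm.finrank_add_finrank_orthogonal' (B := dotProductBilin F F) W
  rw [← dualPi_eq_orthogonal, finrank_fin_fun] at this
  omega

lemma eq_zero_of_forall_trace_mul_transpose_eq_zero {ι κ : Type*} [Fintype ι] [Fintype κ]
    {N : Matrix ι κ F} (h : ∀ M : Matrix ι κ F, trace (M * Nᵀ) = 0) : N = 0 := by
  classical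
  ext i j
  have := h (single i j 1)
  rwa [trace_single_mul, one_smul, transpose_apply] at this

end Duality

section MatIn

variable {k m : ℕ}

def matInEquiv (U : Submodule F (Fin k → F)) : matIn m U ≃ₗ[F] (Fin m → U) where
  toFun M j := ⟨(M : Matrix (Fin k) (Fin m) F)ᵀ j, M.2 j⟩
  invFun f := ⟨(Matrix.of fun j => (f j : Fin k → F))ᵀ, fun j => (f j).2⟩
  map_add' _ _ := rfl
  map_smul' _ _ := rfl
  left_inv _ := rfl
  right_inv _ := rfl

lemma finrank_matIn (U : Submodule F (Fin k → F)) : finrank F (matIn m U) = m * finrank F U := by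
  simp [(matInEquiv U).finrank_eq, finrank_pi_fintype]

lemma rank_le_finrank_of_mem_matIn {U : Submodule F (Fin k → F)} {M : Matrix (Fin k) (Fin m) F}
    (hM : M ∈ matIn m U) : M.rank ≤ finrank F U := by
  rw [rank_eq_finrank_span_cols]
  exact Submodule.finrank_mono (Submodule.span_le.2 (Set.range_subset_iff.2 hM))

lemma mem_matIn_span_cols (M : Matrix (Fin k) (Fin m) F) :
    M ∈ matIn m (Submodule.span F (Set.range Mᵀ)) :=
  fun j => Submodule.subset_span ⟨j, rfl⟩

lemma trace_mul_transpose_eq_zero_of_mem_matIn {W : Submodule F (Fin k → F)}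
    {M N : Matrix (Fin k) (Fin m) F} (hM : M ∈ matIn m (dualPi W)) (hN : N ∈ matIn m W) :
    trace (M * Nᵀ) = 0 := by
  calc trace (M * Nᵀ) = ∑ j, ∑ i, Nᵀ j i * Mᵀ j i := by
        simp only [trace, diag, mul_apply, transpose_apply, mul_comm]
        exact Finset.sum_comm
    _ = 0 := Finset.sum_eq_zero fun j _ => hM j _ (hN j)

end MatIn

section Codes

variable {k m : ℕ} {C : Submodule F (Matrix (Fin k) (Fin m) F)}

lemma minrk_le_rank {M : Matrix (Fin k) (Fin m) F} (hM : M ∈ C) (h0 : M ≠ 0) :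
    minrk C ≤ M.rank :=
  Nat.sInf_le ⟨M, hM, h0, rfl⟩

lemma exists_rank_eq_minrk (hC : C ≠ ⊥) : ∃ M ∈ C, M ≠ 0 ∧ M.rank = minrk C := by
  obtain ⟨M, hM, h0⟩ := C.ne_bot_iff.1 hC
  exact Nat.sInf_mem (s := {r | ∃ M ∈ C, M ≠ 0 ∧ M.rank = r}) ⟨M.rank, M, hM, h0, rfl⟩

lemma one_le_minrk (hC : C ≠ ⊥) : 1 ≤ minrk C := by
  obtain ⟨M, -, h0, hM⟩ := exists_rank_eq_minrk hC
  rw [← hM, Nat.one_le_iff_ne_zero]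
  exact fun h => h0 (Matrix.rank_eq_zero_iff.1 h)

lemma minrk_le_height (hC : C ≠ ⊥) : minrk C ≤ k := by
  obtain ⟨M, -, -, hM⟩ := exists_rank_eq_minrk hC
  exact hM ▸ M.rank_le_height

lemma minrk_le_width (hC : C ≠ ⊥) : minrk C ≤ m := by
  obtain ⟨M, -, -, hM⟩ := exists_rank_eq_minrk hC
  exact hM ▸ M.rank_le_width

lemma disjoint_matIn {U : Submodule F (Fin k → F)} (hU : finrank F U < minrk C) :
    Disjoint C (matIn m U) := by
  rw [Submodule.disjoint_def]
  intro M hMC hMU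
  by_contra h0
  exact (rank_le_finrank_of_mem_matIn hMU).not_gt (hU.trans_le (minrk_le_rank hMC h0))

lemma finrank_sup_matIn {U : Submodule F (Fin k → F)} (hU : finrank F U < minrk C) :
    finrank F ↥(C ⊔ matIn m U) = finrank F C + m * finrank F U := by
  rw [← finrank_matIn, ← Submodule.finrank_sup_add_finrank_inf_eq, (disjoint_matIn hU).eq_bot,
    finrank_bot, add_zero]

theorem finrank_le_mul_sub_minrk_add_one (hC : C ≠ ⊥) :
    finrank F C ≤ m * (k - minrk C + 1) := by
  have h1 := one_le_minrk hC
  have hk := minrk_le_height hC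
  obtain ⟨U, -, hU⟩ := (⊤ : Submodule F (Fin k → F)).exists_le_finrank_eq
    (n := minrk C - 1) (by rw [finrank_top, finrank_fin_fun]; omega)
  have hsup := Submodule.finrank_le (C ⊔ matIn m U)
  rw [finrank_sup_matIn (by omega), hU, finrank_matrix_fin] at hsup
  have hsplit : m * (k - minrk C + 1) + m * (minrk C - 1) = k * m := by zify [h1, hk]; ring
  omega

theorem lt_rank_of_mem_dualCode (hC : C ≠ ⊥) (hdim : finrank F C = m * (k - minrk C + 1))
    {N : Matrix (Fin k) (Fin m) F} (hN : N ∈ dualCode C) (h0 : N ≠ 0) :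
    k - minrk C + 1 < N.rank := by
  have h1 := one_le_minrk hC
  have hk := minrk_le_height hC
  by_contra! hrank
  set W := Submodule.span F (Set.range Nᵀ)
  have hW : finrank F W = N.rank := (rank_eq_finrank_span_cols N).symm
  obtain ⟨V, hVW, hV⟩ := (dualPi W).exists_le_finrank_eq (n := minrk C - 1)
    (by have := le_finrank_add_finrank_dualPi W; omega)
  have htop : C ⊔ matIn m V = ⊤ := by
    refine Submodule.eq_top_of_finrank_eq ?_
    rw [finrank_sup_matIn (by omega), hdim, hV, finrank_matrix_fin]
    zify [h1, hk]
    ring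
  refine h0 (eq_zero_of_forall_trace_mul_transpose_eq_zero fun M => ?_)
  have hM : M ∈ C ⊔ matIn m V := htop ▸ Submodule.mem_top
  obtain ⟨A, hA, B, hB, rfl⟩ := Submodule.mem_sup.1 hM
  rw [Matrix.add_mul, trace_add, hN A hA,
    trace_mul_transpose_eq_zero_of_mem_matIn (fun j => hVW (hB j)) (mem_matIn_span_cols N),
    add_zero]

theorem finrank_dualCode_eq (hC : C ≠ ⊥) (hD : dualCode C ≠ ⊥)
    (hdim : finrank F C = m * (k - minrk C + 1)) :
    finrank F (dualCode C) = m * (k - minrk (dualCode C) + 1) := by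
  have h1 := one_le_minrk hC
  have hk := minrk_le_height hC
  obtain ⟨N, hN, h0, hNr⟩ := exists_rank_eq_minrk hD
  have hlt := hNr ▸ lt_rank_of_mem_dualCode hC hdim hN h0
  have hk' := minrk_le_height hD
  have hupper := finrank_le_mul_sub_minrk_add_one hD
  have hlower := le_finrank_add_finrank_dualCode C
  have hmono : m * (k - minrk (dualCode C) + 1) ≤ m * (minrk C - 1) :=
    Nat.mul_le_mul_left _ (by omega)
  have hsplit : m * (k - minrk C + 1) + m * (minrk C - 1) = k * m := by zify [h1, hk]; ring
  omega

lemma dualCode_bot : dualCode (⊥ : Submodule F (Matrix (Fin k) (Fin m) F)) = ⊤ :=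
  eq_top_iff.2 fun _ _ M hM => by rw [(Submodule.mem_bot F).1 hM, Matrix.zero_mul, trace_zero]

lemma isMRD_top : IsMRD (⊤ : Submodule F (Matrix (Fin k) (Fin m) F)) := by
  by_cases htop : (⊤ : Submodule F (Matrix (Fin k) (Fin m) F)) = ⊥
  · exact Or.inl htop
  have hk := minrk_le_height htop
  have hm := minrk_le_width htop
  have hone : minrk (⊤ : Submodule F (Matrix (Fin k) (Fin m) F)) = 1 := by
    have h1 := one_le_minrk htop
    have hbound := finrank_le_mul_sub_minrk_add_one htop
    rw [finrank_top, finrank_matrix_fin, mul_comm k m] at hbound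
    have := Nat.le_of_mul_le_mul_left hbound (by omega)
    omega
  right
  rw [finrank_top, finrank_matrix_fin, hone, Nat.sub_add_cancel (by omega), max_mul_min]

theorem IsMRD.dualCode_of_le (hkm : k ≤ m) (hC : IsMRD C) : IsMRD (dualCode C) := by
  by_cases hbot : C = ⊥
  · rw [hbot, dualCode_bot]
    exact isMRD_top
  by_cases hD : dualCode C = ⊥
  · exact Or.inl hD
  rw [IsMRD, max_eq_right hkm, min_eq_left hkm] at hC ⊢
  exact Or.inr (finrank_dualCode_eq hbot hD (hC.resolve_left hbot))

end Codes

section Transpose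

variable {k m : ℕ} {C : Submodule F (Matrix (Fin k) (Fin m) F)}

lemma mem_map_transpose {N : Matrix (Fin m) (Fin k) F} :
    N ∈ C.map (transposeLinearEquiv (Fin k) (Fin m) F F).toLinearMap ↔ Nᵀ ∈ C :=
  Submodule.mem_map_equiv C

lemma dualCode_map_transpose :
    dualCode (C.map (transposeLinearEquiv (Fin k) (Fin m) F F).toLinearMap) =
      (dualCode C).map (transposeLinearEquiv (Fin k) (Fin m) F F).toLinearMap := by
  ext N
  rw [mem_map_transpose]
  change (∀ M ∈ C.map _, _) ↔ ∀ M ∈ C, _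
  simp only [Submodule.mem_map, forall_exists_index, and_imp, forall_apply_eq_imp_iff₂]
  exact forall₂_congr fun M _ => by rw [← trace_transpose_mul, transpose_transpose]; rfl

lemma minrk_map_transpose :
    minrk (C.map (transposeLinearEquiv (Fin k) (Fin m) F F).toLinearMap) = minrk C := by
  simp only [minrk, Submodule.mem_map]
  congr 1
  ext r
  simp

lemma isMRD_map_transpose_iff :
    IsMRD (C.map (transposeLinearEquiv (Fin k) (Fin m) F F).toLinearMap) ↔ IsMRD C := by
  rw [IsMRD, IsMRD, Submodule.map_eq_bot_iff, LinearEquiv.finrank_map_eq, minrk_map_transpose,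
    max_comm, min_comm]

end Transpose

theorem stmt_7_general (F : Type) [Field F] (k m : ℕ)
    (C : Submodule F (Matrix (Fin k) (Fin m) F)) (hC : IsMRD C) :
    IsMRD (dualCode C) := by
  rcases le_total k m with hkm | hmk
  · exact hC.dualCode_of_le hkm
  · rw [← isMRD_map_transpose_iff, ← dualCode_map_transpose]
    exact (isMRD_map_transpose_iff.2 hC).dualCode_of_le hmk

/-- The dual of an MRD code is MRD. -/
theorem stmt_7 (F : Type) [Field F] [Fintype F] (k m : ℕ) (hk : 0 < k) (hm : 0 < m)
    (C : Submodule F (Matrix (Fin k) (Fin m) F)) (hC : IsMRD C) :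
    IsMRD (dualCode C) :=
  stmt_7_general F k m C hC
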